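/- Fix 0<q<1 and α>−1. Then for every integer n≥0: Σ_{j=0}^{n} π̃_j^{(α)} = (q^{α+2};q)_n (1−γ(1,α+1;q)) / ( (q;q)_n (1−γ(n+1,α+1;q)) ). -/

import Mathlib

/-!
Write `γₙ = γ(n, α+1; q)` and `Oₙ = γₙ / (1 - γₙ)`. Peeling off the first factor of
`(a;q)_∞` gives `γ₀ = 0` and the recurrence `(1 - q^{n+α+1}) γₙ = (1 - qⁿ) γₙ₊₁`. By the
recurrence, `λ̃ₙ / μ̃ₙ₊₁` is the ratio of consecutive differences `Oₙ₊₂ - Oₙ₊₁` and `Oₙ₊₁ - Oₙ`,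
so `π̃ₙ = (Oₙ₊₁ - Oₙ) / O₁` and the partial sums telescope to `Oₙ₊₁ / O₁`. Iterating the
recurrence gives `(q^{α+2};q)ₙ / (q;q)ₙ = γₙ₊₁ / γ₁`, which turns `Oₙ₊₁ / O₁` into the
right-hand side. Positivity of `(a;q)_∞` and `γₙ < 1` come from writing `(a;q)_∞` as the
exponential of a convergent series of logarithms.
-/

open Finset

/-- The finite q-Pochhammer symbol `(a;q)_n = ∏_{k=0}^{n−1} (1 − a q^k)`. -/
noncomputable def qPochN (q a : ℝ) (n : ℕ) : ℝ :=
  ∏ k ∈ Finset.range n, (1 - a * q ^ k)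

/-- The infinite q-Pochhammer symbol `(a;q)_∞ = ∏_{k=0}^∞ (1 − a q^k)`. -/
noncomputable def qPochInf (q a : ℝ) : ℝ :=
  ∏' k : ℕ, (1 - a * q ^ k)

/-- `γ(u,v;q) = (q^u;q)_∞/(q^{u+v};q)_∞`. -/
noncomputable def qgamma (q u v : ℝ) : ℝ :=
  qPochInf q (q ^ u) / qPochInf q (q ^ (u + v))

/-- `r_n^{(α)} = (1−γ(n+1,α+1;q))/(1−γ(n,α+1;q))`. -/
noncomputable def rQL (q α : ℝ) (n : ℕ) : ℝ :=
  (1 - qgamma q ((n : ℝ) + 1) (α + 1)) / (1 - qgamma q (n : ℝ) (α + 1))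

/-- The birth rates `λ̃_n^{(α)} = q^{−2n−α−1}(1−q^{n+α+1})/r_n^{(α)}`. -/
noncomputable def lamQL (q α : ℝ) (n : ℕ) : ℝ :=
  q ^ (-(2 * (n : ℝ)) - α - 1) * (1 - q ^ ((n : ℝ) + α + 1)) / rQL q α n

/-- The death rates `μ̃_n^{(α)} = q^{−2n−α}(1−q^n) r_n^{(α)}`. -/
noncomputable def muQL (q α : ℝ) (n : ℕ) : ℝ :=
  q ^ (-(2 * (n : ℝ)) - α) * (1 - q ^ (n : ℝ)) * rQL q α n

/-- `π̃_n^{(α)} = ∏_{k=0}^{n−1} λ̃_k^{(α)}/μ̃_{k+1}^{(α)}` (with `π̃_0 = 1`). -/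
noncomputable def piQL (q α : ℝ) (n : ℕ) : ℝ :=
  ∏ k ∈ Finset.range n, lamQL q α k / muQL q α (k + 1)

/-- `T̃_k^{(α)} = Σ_{j=0}^{k} π̃_j^{(α)}`. -/
noncomputable def TQL (q α : ℝ) (k : ℕ) : ℝ :=
  ∑ j ∈ Finset.range (k + 1), piQL q α j

/-- The descending q-Pochhammer symbol `(q^k;q^{−1})_ℓ = ∏_{i=0}^{ℓ−1}(1−q^{k−i})`. -/
noncomputable def qPochDesc (q : ℝ) (k ℓ : ℕ) : ℝ :=
  ∏ i ∈ Finset.range ℓ, (1 - q ^ ((k : ℝ) - (i : ℝ)))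

section qPochhammer

variable {q : ℝ}

lemma multipliable_one_sub_mul_pow (hq : |q| < 1) (a : ℝ) :
    Multipliable fun k : ℕ => 1 - a * q ^ k := by
  simpa only [neg_mul, ← sub_eq_add_neg] using
    Real.multipliable_one_add_of_summable ((summable_geometric_of_abs_lt_one hq).mul_left (-a))

lemma qPochInf_eq_mul (hq : |q| < 1) (a : ℝ) : qPochInf q a = (1 - a) * qPochInf q (a * q) := by
  have htail : Multipliable fun k : ℕ => 1 - a * q ^ (k + 1) := by
    simpa only [pow_succ', mul_assoc] using multipliable_one_sub_mul_pow hq (a * q)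
  rw [qPochInf, tprod_eq_zero_mul' (f := fun k => 1 - a * q ^ k) htail, qPochInf]
  simp only [pow_zero, mul_one, pow_succ', mul_assoc]

lemma qPochInf_one (hq : |q| < 1) : qPochInf q 1 = 0 := by
  rw [qPochInf_eq_mul hq, sub_self, zero_mul]

lemma one_sub_mul_pow_pos (hq0 : 0 ≤ q) (hq1 : q < 1) {a : ℝ} (ha0 : 0 ≤ a) (ha1 : a < 1)
    (k : ℕ) : 0 < 1 - a * q ^ k := by
  have : a * q ^ k ≤ a := mul_le_of_le_one_right ha0 (pow_le_one₀ hq0 hq1.le)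
  linarith

lemma qPochN_succ (a : ℝ) (n : ℕ) : qPochN q a (n + 1) = qPochN q a n * (1 - a * q ^ n) :=
  prod_range_succ _ n

lemma qPochN_pos (hq0 : 0 ≤ q) (hq1 : q < 1) {a : ℝ} (ha0 : 0 ≤ a) (ha1 : a < 1) (n : ℕ) :
    0 < qPochN q a n :=
  prod_pos fun k _ => one_sub_mul_pow_pos hq0 hq1 ha0 ha1 k

lemma summable_log_one_sub_mul_pow (hq : |q| < 1) (a : ℝ) :
    Summable fun k : ℕ => Real.log (1 - a * q ^ k) := by
  simpa only [neg_mul, ← sub_eq_add_neg] using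
    Real.summable_log_one_add_of_summable ((summable_geometric_of_abs_lt_one hq).mul_left (-a))

lemma qPochInf_eq_exp_tsum_log (hq0 : 0 ≤ q) (hq1 : q < 1) {a : ℝ} (ha0 : 0 ≤ a) (ha1 : a < 1) :
    qPochInf q a = Real.exp (∑' k : ℕ, Real.log (1 - a * q ^ k)) :=
  (Real.rexp_tsum_eq_tprod (one_sub_mul_pow_pos hq0 hq1 ha0 ha1)
    (summable_log_one_sub_mul_pow (abs_lt.2 ⟨by linarith, hq1⟩) a)).symm

lemma qPochInf_pos (hq0 : 0 ≤ q) (hq1 : q < 1) {a : ℝ} (ha0 : 0 ≤ a) (ha1 : a < 1) :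
    0 < qPochInf q a := by
  rw [qPochInf_eq_exp_tsum_log hq0 hq1 ha0 ha1]
  exact Real.exp_pos _

lemma qPochInf_lt_qPochInf (hq0 : 0 ≤ q) (hq1 : q < 1) {a b : ℝ} (ha0 : 0 ≤ a) (hab : a < b)
    (hb1 : b < 1) : qPochInf q b < qPochInf q a := by
  have hb0 : 0 ≤ b := ha0.trans hab.le
  have hq : |q| < 1 := abs_lt.2 ⟨by linarith, hq1⟩
  rw [qPochInf_eq_exp_tsum_log hq0 hq1 ha0 (hab.trans hb1),
    qPochInf_eq_exp_tsum_log hq0 hq1 hb0 hb1, Real.exp_lt_exp]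
  refine (summable_log_one_sub_mul_pow hq b).tsum_lt_tsum (i := 0) (fun k => ?_) ?_
    (summable_log_one_sub_mul_pow hq a)
  · refine Real.log_le_log (one_sub_mul_pow_pos hq0 hq1 hb0 hb1 k) ?_
    nlinarith [pow_nonneg hq0 k]
  · refine Real.log_lt_log (one_sub_mul_pow_pos hq0 hq1 hb0 hb1 0) ?_
    simpa using hab

end qPochhammer

section qgamma

variable {q : ℝ}

lemma qgamma_zero (hq : |q| < 1) (v : ℝ) : qgamma q 0 v = 0 := by
  rw [qgamma, Real.rpow_zero, qPochInf_one hq, zero_div]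

lemma qgamma_pos (hq0 : 0 < q) (hq1 : q < 1) {u v : ℝ} (hu : 0 < u) (huv : 0 < u + v) :
    0 < qgamma q u v :=
  div_pos (qPochInf_pos hq0.le hq1 (by positivity) (Real.rpow_lt_one hq0.le hq1 hu))
    (qPochInf_pos hq0.le hq1 (by positivity) (Real.rpow_lt_one hq0.le hq1 huv))

lemma qgamma_lt_one (hq0 : 0 < q) (hq1 : q < 1) {u v : ℝ} (hu : 0 < u) (hv : 0 < v) :
    qgamma q u v < 1 := by
  have huv : q ^ (u + v) < q ^ u := Real.rpow_lt_rpow_of_exponent_gt hq0 hq1 (by linarith)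
  rw [qgamma, div_lt_one (qPochInf_pos hq0.le hq1 (by positivity) (huv.trans
    (Real.rpow_lt_one hq0.le hq1 hu)))]
  exact qPochInf_lt_qPochInf hq0.le hq1 (by positivity) huv (Real.rpow_lt_one hq0.le hq1 hu)

lemma one_sub_rpow_mul_qgamma (hq0 : 0 < q) (hq1 : q < 1) {u v : ℝ} (huv : 0 < u + v) :
    (1 - q ^ (u + v)) * qgamma q u v = (1 - q ^ u) * qgamma q (u + 1) v := by
  have hq : |q| < 1 := abs_lt.2 ⟨by linarith, hq1⟩
  have hfac : 1 - q ^ (u + v) ≠ 0 := (sub_pos.2 (Real.rpow_lt_one hq0.le hq1 huv)).ne'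
  have htail : qPochInf q (q ^ (u + 1 + v)) ≠ 0 :=
    (qPochInf_pos hq0.le hq1 (by positivity) (Real.rpow_lt_one hq0.le hq1 (by linarith))).ne'
  rw [qgamma, qgamma, qPochInf_eq_mul hq (q ^ u), qPochInf_eq_mul hq (q ^ (u + v)),
    ← Real.rpow_add_one hq0.ne', ← Real.rpow_add_one hq0.ne', add_right_comm u v 1]
  field_simp

end qgamma

noncomputable def gammaQL (q α : ℝ) (n : ℕ) : ℝ :=
  qgamma q n (α + 1)

noncomputable def oddsQL (q α : ℝ) (n : ℕ) : ℝ :=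
  gammaQL q α n / (1 - gammaQL q α n)

section qLaguerre

variable {q α : ℝ}

lemma gammaQL_zero (hq0 : 0 < q) (hq1 : q < 1) : gammaQL q α 0 = 0 := by
  rw [gammaQL, Nat.cast_zero, qgamma_zero (abs_lt.2 ⟨by linarith, hq1⟩)]

lemma gammaQL_one_pos (hq0 : 0 < q) (hq1 : q < 1) (hα : -1 < α) : 0 < gammaQL q α 1 :=
  qgamma_pos hq0 hq1 (by norm_num) (by push_cast; linarith)

lemma gammaQL_lt_one (hq0 : 0 < q) (hq1 : q < 1) (hα : -1 < α) (n : ℕ) : gammaQL q α n < 1 := by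
  rcases n.eq_zero_or_pos with rfl | hn
  · rw [gammaQL_zero hq0 hq1]
    exact one_pos
  · exact qgamma_lt_one hq0 hq1 (Nat.cast_pos.2 hn) (by linarith)

lemma one_sub_gammaQL_ne_zero (hq0 : 0 < q) (hq1 : q < 1) (hα : -1 < α) (n : ℕ) :
    1 - gammaQL q α n ≠ 0 :=
  (sub_pos.2 (gammaQL_lt_one hq0 hq1 hα n)).ne'

lemma one_sub_pow_mul_gammaQL (hq0 : 0 < q) (hq1 : q < 1) (hα : -1 < α) (n : ℕ) :
    (1 - q ^ n * q ^ (α + 1)) * gammaQL q α n = (1 - q ^ n) * gammaQL q α (n + 1) := by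
  have h := one_sub_rpow_mul_qgamma hq0 hq1 (u := n) (v := α + 1)
    (add_pos_of_nonneg_of_pos n.cast_nonneg (by linarith))
  rwa [Real.rpow_add hq0, Real.rpow_natCast, ← Nat.cast_succ] at h

lemma mul_gammaQL_succ_sub (hq0 : 0 < q) (hq1 : q < 1) (hα : -1 < α) (n : ℕ) :
    q * (1 - q ^ n * q ^ (α + 1)) * (gammaQL q α (n + 1) - gammaQL q α n)
      = (1 - q ^ (n + 1)) * (gammaQL q α (n + 2) - gammaQL q α (n + 1)) := by
  linear_combination -q * one_sub_pow_mul_gammaQL hq0 hq1 hα n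
    + one_sub_pow_mul_gammaQL hq0 hq1 hα (n + 1)

lemma rQL_eq (n : ℕ) : rQL q α n = (1 - gammaQL q α (n + 1)) / (1 - gammaQL q α n) := by
  rw [rQL, gammaQL, gammaQL, Nat.cast_succ]

lemma lamQL_div_muQL (hq0 : 0 < q) (hq1 : q < 1) (hα : -1 < α) (n : ℕ) :
    lamQL q α n / muQL q α (n + 1)
      = q * (1 - q ^ n * q ^ (α + 1)) * (1 - gammaQL q α n)
        / ((1 - q ^ (n + 1)) * (1 - gammaQL q α (n + 2))) := by
  have hfac : 1 - q ^ (n + 1) ≠ 0 := (sub_pos.2 (pow_lt_one₀ hq0.le hq1 n.succ_ne_zero)).ne'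
  have hscale : q ^ (-(2 * ((n + 1 : ℕ) : ℝ)) - α) ≠ 0 := (Real.rpow_pos_of_pos hq0 _).ne'
  rw [lamQL, muQL, rQL_eq, rQL_eq,
    show -(2 * (n : ℝ)) - α - 1 = (-(2 * ((n + 1 : ℕ) : ℝ)) - α) + 1 by push_cast; ring,
    Real.rpow_add_one hq0.ne', add_assoc, Real.rpow_add hq0, Real.rpow_natCast, Real.rpow_natCast]
  have := one_sub_gammaQL_ne_zero hq0 hq1 hα (n + 1)
  field_simp

lemma oddsQL_zero (hq0 : 0 < q) (hq1 : q < 1) : oddsQL q α 0 = 0 := by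
  rw [oddsQL, gammaQL_zero hq0 hq1, zero_div]

lemma oddsQL_succ_sub (hq0 : 0 < q) (hq1 : q < 1) (hα : -1 < α) (n : ℕ) :
    oddsQL q α (n + 1) - oddsQL q α n
      = (gammaQL q α (n + 1) - gammaQL q α n)
        / ((1 - gammaQL q α n) * (1 - gammaQL q α (n + 1))) := by
  have := one_sub_gammaQL_ne_zero hq0 hq1 hα n
  have := one_sub_gammaQL_ne_zero hq0 hq1 hα (n + 1)
  rw [oddsQL, oddsQL]
  field_simp
  ring

lemma piQL_eq_oddsQL_sub (hq0 : 0 < q) (hq1 : q < 1) (hα : -1 < α) (n : ℕ) :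
    piQL q α n = (oddsQL q α (n + 1) - oddsQL q α n) / oddsQL q α 1 := by
  have hodds : oddsQL q α 1 ≠ 0 :=
    div_ne_zero (gammaQL_one_pos hq0 hq1 hα).ne' (one_sub_gammaQL_ne_zero hq0 hq1 hα 1)
  induction n with
  | zero => rw [piQL, prod_range_zero, zero_add, oddsQL_zero hq0 hq1, sub_zero, div_self hodds]
  | succ n ih =>
    have hfac : 1 - q ^ (n + 1) ≠ 0 := (sub_pos.2 (pow_lt_one₀ hq0.le hq1 n.succ_ne_zero)).ne'
    rw [piQL, prod_range_succ, ← piQL, ih, lamQL_div_muQL hq0 hq1 hα, oddsQL_succ_sub hq0 hq1 hα,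
      oddsQL_succ_sub hq0 hq1 hα]
    have := one_sub_gammaQL_ne_zero hq0 hq1 hα n
    have := one_sub_gammaQL_ne_zero hq0 hq1 hα (n + 1)
    have := one_sub_gammaQL_ne_zero hq0 hq1 hα (n + 2)
    field_simp
    linear_combination mul_gammaQL_succ_sub hq0 hq1 hα n

lemma sum_piQL (hq0 : 0 < q) (hq1 : q < 1) (hα : -1 < α) (n : ℕ) :
    ∑ j ∈ range (n + 1), piQL q α j = oddsQL q α (n + 1) / oddsQL q α 1 := by
  simp_rw [piQL_eq_oddsQL_sub hq0 hq1 hα, ← sum_div, sum_range_sub, oddsQL_zero hq0 hq1, sub_zero]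

lemma gammaQL_succ_mul_qPochN (hq0 : 0 < q) (hq1 : q < 1) (hα : -1 < α) (n : ℕ) :
    gammaQL q α (n + 1) * qPochN q q n = gammaQL q α 1 * qPochN q (q ^ (α + 2)) n := by
  induction n with
  | zero => simp [qPochN]
  | succ n ih =>
    have hpow : q ^ (α + 2) * q ^ n = q ^ (n + 1) * q ^ (α + 1) := by
      rw [show α + 2 = (α + 1) + 1 by ring, Real.rpow_add_one hq0.ne']
      ring
    rw [qPochN_succ, qPochN_succ, hpow]
    linear_combination (1 - q ^ (n + 1) * q ^ (α + 1)) * ih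
      - qPochN q q n * one_sub_pow_mul_gammaQL hq0 hq1 hα (n + 1)

end qLaguerre

/-- Lemma 6.10: `Σ_{j=0}^{n} π̃_j^{(α)}
  = (q^{α+2};q)_n (1−γ(1,α+1;q)) / ((q;q)_n (1−γ(n+1,α+1;q)))`. -/
theorem modified_qLaguerre_partial_sum_pi
    (q α : ℝ) (hq0 : 0 < q) (hq1 : q < 1) (hα : -1 < α) (n : ℕ) :
    ∑ j ∈ Finset.range (n + 1), piQL q α j
      = qPochN q (q ^ (α + 2)) n * (1 - qgamma q 1 (α + 1))
        / (qPochN q q n * (1 - qgamma q ((n : ℝ) + 1) (α + 1))) := by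
  have hγ1_pos := gammaQL_one_pos hq0 hq1 hα
  have hP_pos := qPochN_pos hq0.le hq1 hq0.le hq1 n
  have hγ1 : qgamma q 1 (α + 1) = gammaQL q α 1 := by rw [gammaQL, Nat.cast_one]
  have hγn : qgamma q ((n : ℝ) + 1) (α + 1) = gammaQL q α (n + 1) := by rw [gammaQL, Nat.cast_succ]
  have := one_sub_gammaQL_ne_zero hq0 hq1 hα 1
  have := one_sub_gammaQL_ne_zero hq0 hq1 hα (n + 1)
  rw [sum_piQL hq0 hq1 hα, hγ1, hγn, oddsQL, oddsQL]
  field_simp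
  linear_combination gammaQL_succ_mul_qPochN hq0 hq1 hα n
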